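/- Let W = (𝒫,[n]) be an admissible Wilson loop diagram containing two propagators p = (i,j) and q = (i,j+1) adjacent on the edge i (with the cyclic interval from j to j+1 not containing i). Then (j, j+2) ∉ 𝒫 (it would cross q) and (j−1, j+1) ∉ 𝒫 (it would cross p). If moreover q is the only propagator of 𝒫 incident to the edge j+1 and p is the only propagator of 𝒫 incident to the edge j, then both Wilson loop diagrams ((𝒫 ∖ {q}) ∪ {(j, j+2)}, [n]) and ((𝒫 ∖ {p}) ∪ {(j−1, j+1)}, [n]) are admissible. -/

import Mathlib

/-!
Single-propagator density forces `i ∉ {j - 1, j, j + 1, j + 2}` and pair density rules out the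
reversed copies `(j + 1, i)` and `(j, i)`; hence `(j, j + 2)` crosses `q` and `(j - 1, j + 1)`
crosses `p`. A propagator `(b - 1, b + 1)` can only be crossed by propagators incident to the
edge `b`, which after the replacement no longer exist. For local density, a subset containing the
new propagator either contains the kept one among `p, q`, and then its support contains that of the
subset with the removed propagator in place of the new one, or it does not, and then the vertex
`j + 1` of the new propagator lies in no other support.
-/

/-- `b` lies strictly inside the cyclic interval going (in the increasing cyclic direction)
from `a` to `c` in `ZMod n`. -/
def Inside {n : ℕ} (a b c : ZMod n) : Prop :=
  0 < (b - a).val ∧ (b - a).val < (c - a).val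

/-- Two propagators (given as ordered pairs representing unordered pairs) cross:
exactly one endpoint of `q` lies strictly inside each of the two cyclic intervals into
which the endpoints of `p` divide `ZMod n`. -/
def Cross {n : ℕ} (p q : ZMod n × ZMod n) : Prop :=
  (Inside p.1 q.1 p.2 ∧ Inside p.2 q.2 p.1) ∨
    (Inside p.1 q.2 p.2 ∧ Inside p.2 q.1 p.1)

/-- The support `V_p = {i, i+1, j, j+1}` of a propagator `p = (i,j)`. -/
def propSupp {n : ℕ} (p : ZMod n × ZMod n) : Finset (ZMod n) :=
  {p.1, p.1 + 1, p.2, p.2 + 1}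

/-- The support `V_P` of a multiset of propagators. -/
def multiSupp {n : ℕ} (P : Multiset (ZMod n × ZMod n)) : Finset (ZMod n) :=
  (P.map propSupp).sup

/-- A Wilson loop diagram `(Ps, [n])` is admissible: no two propagators cross,
every nonempty subset `P` of the propagators satisfies `|V_P| ≥ |P| + 3`
(local density), and `n ≥ |Ps| + 4` (global density). -/
def Admissible (n : ℕ) (Ps : Multiset (ZMod n × ZMod n)) : Prop :=
  (∀ p ∈ Ps, ∀ q ∈ Ps, ¬ Cross p q) ∧
  (∀ P : Multiset (ZMod n × ZMod n), P ≤ Ps → P ≠ 0 →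
    Multiset.card P + 3 ≤ (multiSupp P).card) ∧
  Multiset.card Ps + 4 ≤ n

namespace ZMod

variable {n : ℕ}

theorem val_add_eq_or [NeZero n] (a b : ZMod n) :
    (a + b).val = a.val + b.val ∨ (a + b).val + n = a.val + b.val := by
  rcases lt_or_ge (a.val + b.val) n with h | h
  · exact .inl (val_add_of_lt h)
  · exact .inr (val_add_val_of_le h).symm

theorem natCast_ne_zero_of_lt {k : ℕ} (hk : 0 < k) (hkn : k < n) : (k : ZMod n) ≠ 0 := by
  rw [ne_eq, natCast_eq_zero_iff]; exact Nat.not_dvd_of_pos_of_lt hk hkn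

theorem val_two_of_lt (hn : 2 < n) : (2 : ZMod n).val = 2 := by
  rw [val_two_eq_two_mod, Nat.mod_eq_of_lt hn]

end ZMod

open Finset

section CyclicOrder

variable {n : ℕ}

theorem Inside.inside_of_opposite [NeZero n] {a x b y : ZMod n} (h₁ : Inside a x b)
    (h₂ : Inside b y a) : Inside x b y := by
  unfold Inside at *
  -- arc lengths add modulo `n`; `val_add_eq_or` records whether each sum wraps around
  have hB := ZMod.val_add_eq_or (b - x) (x - a)
  have hQ := ZMod.val_add_eq_or (y - b) (b - x)
  have hA := ZMod.val_add_eq_or (a - b) (b - a)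
  simp only [sub_add_sub_cancel, sub_self, ZMod.val_zero] at hB hQ hA
  have := ZMod.val_lt (b - x)
  have := ZMod.val_lt (y - x)
  omega

theorem Inside.eq_of_sub_one_add_one [NeZero n] {b x : ZMod n} (h : Inside (b - 1) x (b + 1)) :
    x = b := by
  obtain ⟨h₀, h₂⟩ := h
  have h2 : b + 1 - (b - 1) = 2 := by ring
  rw [h2, ZMod.val_two_eq_two_mod] at h₂
  have h1 : (x - (b - 1)).val = 1 := by have := Nat.mod_le 2 n; omega
  have hn : 1 < n := by have := ZMod.val_lt (x - (b - 1)); omega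
  rw [ZMod.val_eq_one hn, sub_eq_iff_eq_add', sub_add_cancel] at h1
  exact h1

theorem inside_sub_one_self_add_one (hn : 2 < n) (b : ZMod n) : Inside (b - 1) b (b + 1) := by
  have h1 : b - (b - 1) = 1 := by ring
  have h2 : b + 1 - (b - 1) = 2 := by ring
  rw [Inside, h1, h2, ZMod.val_one'' (by omega), ZMod.val_two_of_lt hn]
  omega

theorem inside_add_one_sub_one [NeZero n] (hn : 2 < n) {b x : ZMod n} (h₁ : x ≠ b - 1)
    (h₂ : x ≠ b) (h₃ : x ≠ b + 1) : Inside (b + 1) x (b - 1) := by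
  have hx := ZMod.val_add_eq_or (x - (b + 1)) 2
  have hm := ZMod.val_add_eq_or (b - 1 - (b + 1)) 2
  have e₁ : x - (b + 1) + 2 = x - (b - 1) := by ring
  have e₂ : b - 1 - (b + 1) + 2 = 0 := by ring
  have z₀ : (x - (b - 1)).val ≠ 0 := by rw [ne_eq, ZMod.val_eq_zero, sub_eq_zero]; exact h₁
  have z₁ : (x - (b - 1)).val ≠ 1 := by
    rw [ne_eq, ZMod.val_eq_one (by omega), sub_eq_iff_eq_add', sub_add_cancel]; exact h₂
  have y₀ : (x - (b + 1)).val ≠ 0 := by rw [ne_eq, ZMod.val_eq_zero, sub_eq_zero]; exact h₃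
  rw [e₁, ZMod.val_two_of_lt hn] at hx
  rw [e₂, ZMod.val_two_of_lt hn, ZMod.val_zero] at hm
  have := ZMod.val_lt (x - (b - 1))
  have := ZMod.val_lt (x - (b + 1))
  constructor <;> omega

theorem cross_swap_left (p q : ZMod n × ZMod n) : Cross p.swap q ↔ Cross p q := by
  simp only [Cross, Prod.fst_swap, Prod.snd_swap]
  tauto

theorem Cross.symm [NeZero n] {p q : ZMod n × ZMod n} (h : Cross p q) : Cross q p := by
  rcases h with ⟨h₁, h₂⟩ | ⟨h₁, h₂⟩
  · exact .inr ⟨h₁.inside_of_opposite h₂, h₂.inside_of_opposite h₁⟩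
  · exact .inl ⟨h₂.inside_of_opposite h₁, h₁.inside_of_opposite h₂⟩

theorem Cross.incident_of_sub_one_add_one [NeZero n] {b : ZMod n} {r : ZMod n × ZMod n}
    (h : Cross (b - 1, b + 1) r) : r.1 = b ∨ r.2 = b := by
  rcases h with ⟨h, -⟩ | ⟨h, -⟩
  · exact .inl h.eq_of_sub_one_add_one
  · exact .inr h.eq_of_sub_one_add_one

theorem cross_sub_one_add_one [NeZero n] (hn : 2 < n) {b x : ZMod n} (h₁ : x ≠ b - 1)
    (h₂ : x ≠ b) (h₃ : x ≠ b + 1) : Cross (b - 1, b + 1) (x, b) :=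
  .inr ⟨inside_sub_one_self_add_one hn b, inside_add_one_sub_one hn h₁ h₂ h₃⟩

end CyclicOrder

section Support

variable {n : ℕ}

@[simp]
theorem multiSupp_zero : multiSupp (0 : Multiset (ZMod n × ZMod n)) = ∅ := rfl

@[simp]
theorem multiSupp_cons (r : ZMod n × ZMod n) (P : Multiset (ZMod n × ZMod n)) :
    multiSupp (r ::ₘ P) = propSupp r ∪ multiSupp P := by
  simp [multiSupp, sup_eq_union]

@[simp]
theorem multiSupp_singleton (r : ZMod n × ZMod n) : multiSupp {r} = propSupp r := by
  simp [multiSupp]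

theorem mem_multiSupp {x : ZMod n} {P : Multiset (ZMod n × ZMod n)} :
    x ∈ multiSupp P ↔ ∃ r ∈ P, x ∈ propSupp r := by
  induction P using Multiset.induction with
  | empty => simp
  | cons a s ih => simp [ih]

theorem propSupp_swap (r : ZMod n × ZMod n) : propSupp r.swap = propSupp r := by
  ext; simp only [propSupp, Prod.fst_swap, Prod.snd_swap, mem_insert, mem_singleton]; tauto

theorem card_propSupp_le (r : ZMod n × ZMod n) : #(propSupp r) ≤ 4 := card_le_four

theorem card_propSupp_sub_one_add_one (hn : 3 < n) (b : ZMod n) :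
    #(propSupp (b - 1, b + 1)) = 4 := by
  have h₁ : ((1 : ℕ) : ZMod n) ≠ 0 := ZMod.natCast_ne_zero_of_lt (by norm_num) (by omega)
  have h₂ : ((2 : ℕ) : ZMod n) ≠ 0 := ZMod.natCast_ne_zero_of_lt (by norm_num) (by omega)
  have h₃ : ((3 : ℕ) : ZMod n) ≠ 0 := ZMod.natCast_ne_zero_of_lt (by norm_num) (by omega)
  push_cast at h₁ h₂ h₃
  rw [propSupp, card_eq_four]
  exact ⟨_, _, _, _, fun h => h₁ (by linear_combination -h),
    fun h => h₂ (by linear_combination -h), fun h => h₃ (by linear_combination -h),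
    fun h => h₁ (by linear_combination -h), fun h => h₂ (by linear_combination -h),
    fun h => h₁ (by linear_combination -h), rfl⟩

end Support

namespace Admissible

variable {n : ℕ} {Ps : Multiset (ZMod n × ZMod n)}

theorem four_lt (hW : Admissible n Ps) {r : ZMod n × ZMod n} (hr : r ∈ Ps) : 4 < n := by
  have := Multiset.card_pos_iff_exists_mem.mpr ⟨r, hr⟩
  have := hW.2.2
  omega

theorem four_le_card_propSupp (hW : Admissible n Ps) {r : ZMod n × ZMod n} (hr : r ∈ Ps) :
    4 ≤ #(propSupp r) := by
  simpa using hW.2.1 {r} (Multiset.singleton_le.mpr hr) (by simp)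

theorem fst_ne (hW : Admissible n Ps) {r : ZMod n × ZMod n} (hr : r ∈ Ps) :
    r.1 ≠ r.2 - 1 ∧ r.1 ≠ r.2 ∧ r.1 ≠ r.2 + 1 := by
  have h4 := le_antisymm (card_propSupp_le r) (hW.four_le_card_propSupp hr)
  obtain ⟨-, h₁, h₂, h₃, -, -⟩ : r.1 ≠ r.1 + 1 ∧ r.1 ≠ r.2 ∧ r.1 ≠ r.2 + 1 ∧ r.1 + 1 ≠ r.2 ∧
      r.1 + 1 ≠ r.2 + 1 ∧ r.2 ≠ r.2 + 1 := by
    rw [propSupp] at h4; grind [card_eq_four]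
  exact ⟨fun h => h₃ (by rw [h, sub_add_cancel]), h₁, h₂⟩

theorem five_le_card_propSupp_union (hW : Admissible n Ps) {a b : ZMod n × ZMod n}
    (hab : a ≠ b) (ha : a ∈ Ps) (hb : b ∈ Ps) : 5 ≤ #(propSupp a ∪ propSupp b) := by
  have hle : a ::ₘ {b} ≤ Ps := by
    rw [← Multiset.cons_erase ha]
    exact Multiset.cons_le_cons _
      (Multiset.singleton_le.mpr ((Multiset.mem_erase_of_ne hab.symm).mpr hb))
  simpa using hW.2.1 _ hle (by simp)

theorem nodup (hW : Admissible n Ps) : Ps.Nodup := by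
  classical
  rw [Multiset.nodup_iff_count_le_one]
  intro r
  by_contra! h
  have := hW.2.1 {r, r} (Multiset.le_count_iff_replicate_le.mp h) (by simp)
  simp only [Multiset.insert_eq_cons, Multiset.card_cons, Multiset.card_singleton, multiSupp_cons,
    multiSupp_singleton, union_self] at this
  have := card_propSupp_le r
  omega

theorem swap_notMem (hW : Admissible n Ps) {r : ZMod n × ZMod n} (hr : r ∈ Ps) : r.swap ∉ Ps := by
  intro hs
  have hne : r ≠ r.swap := fun h => (hW.fst_ne hr).2.1 (congrArg Prod.fst h)
  have := hW.five_le_card_propSupp_union hne hr hs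
  rw [propSupp_swap, union_self] at this
  have := card_propSupp_le r
  omega

theorem notMem_of_cross (hW : Admissible n Ps) {r s : ZMod n × ZMod n} (hr : r ∈ Ps)
    (h : Cross s r) : s ∉ Ps ∧ s.swap ∉ Ps :=
  ⟨fun hs => hW.1 s hs r hr h, fun hs => hW.1 _ hs r hr ((cross_swap_left s r).mpr h)⟩

theorem density_cons_erase (hW : Admissible n Ps) {q k s : ZMod n × ZMod n} {x : ZMod n}
    (hq : q ∈ Ps) (hs : 4 ≤ #(propSupp s))
    (hsub : propSupp q ⊆ propSupp s ∪ propSupp k) (hx : x ∈ propSupp s)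
    (hxk : ∀ r ∈ Ps.erase q, x ∈ propSupp r → r = k) (P : Multiset (ZMod n × ZMod n))
    (hP : P ≤ s ::ₘ Ps.erase q) (hP0 : P ≠ 0) :
    Multiset.card P + 3 ≤ #(multiSupp P) := by
  by_cases hsP : s ∈ P
  swap
  · exact hW.2.1 P (((Multiset.le_cons_of_notMem hsP).mp hP).trans (Multiset.erase_le q Ps))
      hP0
  obtain ⟨P, rfl⟩ := Multiset.exists_cons_of_mem hsP
  rw [Multiset.cons_le_cons_iff] at hP
  rw [multiSupp_cons, Multiset.card_cons]
  by_cases hkP : k ∈ P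
  · have hqP : q ::ₘ P ≤ Ps := Multiset.cons_erase hq ▸ Multiset.cons_le_cons q hP
    have := hW.2.1 _ hqP Multiset.cons_ne_zero
    rw [multiSupp_cons, Multiset.card_cons] at this
    refine this.trans (card_le_card (union_subset (hsub.trans ?_) subset_union_right))
    exact union_subset_union_right fun y hy => mem_multiSupp.mpr ⟨k, hkP, hy⟩
  rcases eq_or_ne P 0 with rfl | hP0
  · simpa using hs
  have hxP : x ∉ multiSupp P := fun h => by
    obtain ⟨r, hr, hxr⟩ := mem_multiSupp.mp h
    exact hkP (hxk r (Multiset.mem_of_le hP hr) hxr ▸ hr)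
  have hPdense := hW.2.1 P (hP.trans (Multiset.erase_le q Ps)) hP0
  calc Multiset.card P + 1 + 3 ≤ #(insert x (multiSupp P)) := by
        rw [card_insert_of_notMem hxP]; omega
    _ ≤ #(propSupp s ∪ multiSupp P) :=
        card_le_card (insert_subset (mem_union_left _ hx) subset_union_right)

theorem replace (hW : Admissible n Ps) {q k : ZMod n × ZMod n} {b x : ZMod n}
    (hq : q ∈ Ps) (hsub : propSupp q ⊆ propSupp (b - 1, b + 1) ∪ propSupp k)
    (hx : x ∈ propSupp (b - 1, b + 1)) (hxk : ∀ r ∈ Ps, x ∈ propSupp r → r = k ∨ r = q)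
    (hb : ∀ r ∈ Ps, (r.1 = b ∨ r.2 = b) → r = q) :
    Admissible n ((b - 1, b + 1) ::ₘ Ps.erase q) := by
  have hn := hW.four_lt hq
  have : NeZero n := ⟨by omega⟩
  have hmem : ∀ {r}, r ∈ Ps.erase q ↔ r ≠ q ∧ r ∈ Ps := hW.nodup.mem_erase_iff
  have hnew : ∀ r ∈ (b - 1, b + 1) ::ₘ Ps.erase q, ¬ Cross (b - 1, b + 1) r := by
    intro r hr hc
    have hinc := hc.incident_of_sub_one_add_one
    rcases Multiset.mem_cons.mp hr with rfl | hr
    · have h₁ : (1 : ZMod n) ≠ 0 := by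
        simpa using ZMod.natCast_ne_zero_of_lt (n := n) one_pos (by omega)
      rcases hinc with h | h
      · exact h₁ (by linear_combination -h)
      · exact h₁ (by linear_combination h)
    · exact (hmem.mp hr).1 (hb r (hmem.mp hr).2 hinc)
  refine ⟨?_, hW.density_cons_erase hq (card_propSupp_sub_one_add_one (by omega) b).ge hsub hx
    (fun r hr h => ((hxk r (hmem.mp hr).2 h).resolve_right (hmem.mp hr).1)), ?_⟩
  · intro u hu v hv
    rcases Multiset.mem_cons.mp hu with rfl | hu'
    · exact hnew v hv
    rcases Multiset.mem_cons.mp hv with rfl | hv'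
    · exact fun hc => hnew u hu hc.symm
    · exact hW.1 u (hmem.mp hu').2 v (hmem.mp hv').2
  · rw [Multiset.card_cons, Multiset.card_erase_add_one hq]
    exact hW.2.2

end Admissible

theorem statement16_general (n : ℕ) (Ps : Multiset (ZMod n × ZMod n))
    (hW : Admissible n Ps) (i j : ZMod n)
    (hp : (i, j) ∈ Ps) (hq : (i, j + 1) ∈ Ps) :
    ((j, j + 2) ∉ Ps ∧ (j + 2, j) ∉ Ps) ∧
    ((j - 1, j + 1) ∉ Ps ∧ (j + 1, j - 1) ∉ Ps) ∧
    ((∀ r ∈ Ps, (r.1 = j + 1 ∨ r.2 = j + 1) → r = (i, j + 1) ∨ r = (j + 1, i)) →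
      (∀ r ∈ Ps, (r.1 = j ∨ r.2 = j) → r = (i, j) ∨ r = (j, i)) →
      Admissible n ((j, j + 2) ::ₘ Ps.erase (i, j + 1)) ∧
      Admissible n ((j - 1, j + 1) ::ₘ Ps.erase (i, j))) := by
  have hn := hW.four_lt hp
  have : NeZero n := ⟨by omega⟩
  have hcenter : ((j + 1 - 1, j + 1 + 1) : ZMod n × ZMod n) = (j, j + 2) :=
    Prod.ext (add_sub_cancel_right j 1) (by ring)
  obtain ⟨hp₁, hp₂, hp₃⟩ := hW.fst_ne hp
  obtain ⟨hq₁, hq₂, hq₃⟩ := hW.fst_ne hq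
  have hcross₁ := hW.notMem_of_cross hq (cross_sub_one_add_one (by omega) hq₁ hq₂ hq₃)
  rw [hcenter] at hcross₁
  refine ⟨hcross₁, hW.notMem_of_cross hp (cross_sub_one_add_one (by omega) hp₁ hp₂ hp₃),
    fun hU₁ hU₀ => ?_⟩
  have hb₁ : ∀ r ∈ Ps, (r.1 = j + 1 ∨ r.2 = j + 1) → r = (i, j + 1) := fun r hr h =>
    (hU₁ r hr h).resolve_right fun e => hW.swap_notMem hq (e ▸ hr : (j + 1, i) ∈ Ps)
  have hb₀ : ∀ r ∈ Ps, (r.1 = j ∨ r.2 = j) → r = (i, j) := fun r hr h =>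
    (hU₀ r hr h).resolve_right fun e => hW.swap_notMem hp (e ▸ hr : (j, i) ∈ Ps)
  have hsupp : ∀ r ∈ Ps, j + 1 ∈ propSupp r → r = (i, j) ∨ r = (i, j + 1) := by
    intro r hr h
    simp only [propSupp, mem_insert, mem_singleton, add_left_inj] at h
    rcases h with h | h | h | h
    · exact .inr (hb₁ r hr (.inl h.symm))
    · exact .inl (hb₀ r hr (.inl h.symm))
    · exact .inr (hb₁ r hr (.inr h.symm))
    · exact .inl (hb₀ r hr (.inr h.symm))
  constructor
  · rw [← hcenter]
    exact hW.replace hq (by simp [propSupp, insert_subset_iff]) (x := j + 1) (by simp [propSupp])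
      hsupp hb₁
  · exact hW.replace hp (by simp [propSupp, insert_subset_iff]) (x := j + 1) (by simp [propSupp])
      (fun r hr h => (hsupp r hr h).symm) hb₀

/-- let `(Ps,[n])` be an admissible Wilson loop diagram containing
propagators `p = (i,j)` and `q = (i,j+1)` adjacent on the edge `i` (the cyclic
interval from `j` to `j+1` not containing `i`, i.e. `i ∉ {j, j+1}`).  Then
`(j,j+2) ∉ Ps` and `(j−1,j+1) ∉ Ps`; and if moreover `q` is the only propagator
incident to the edge `j+1` and `p` is the only propagator incident to the edge `j`,
then replacing `q` by `(j,j+2)` and replacing `p` by `(j−1,j+1)` both yield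
admissible diagrams. -/
theorem statement16 (n : ℕ) (Ps : Multiset (ZMod n × ZMod n))
    (hW : Admissible n Ps) (i j : ZMod n)
    (hp : (i, j) ∈ Ps) (hq : (i, j + 1) ∈ Ps)
    (hij : i ≠ j) (hij1 : i ≠ j + 1) :
    ((j, j + 2) ∉ Ps ∧ (j + 2, j) ∉ Ps) ∧
    ((j - 1, j + 1) ∉ Ps ∧ (j + 1, j - 1) ∉ Ps) ∧
    ((∀ r ∈ Ps, (r.1 = j + 1 ∨ r.2 = j + 1) → r = (i, j + 1) ∨ r = (j + 1, i)) →
      (∀ r ∈ Ps, (r.1 = j ∨ r.2 = j) → r = (i, j) ∨ r = (j, i)) →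
      Admissible n ((j, j + 2) ::ₘ Ps.erase (i, j + 1)) ∧
      Admissible n ((j - 1, j + 1) ::ₘ Ps.erase (i, j))) :=
  statement16_general n Ps hW i j hp hq
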